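/- Finite-n sandwich bound for the uniform-prior posterior: Let n ≥ 1, ν ∈ R_n, and Q ⊆ P(X) with Q ∩ R_n ≠ ∅. Then max_{q∈Q∩R_n} L(q‖ν) − max_{q∈R_n} L(q‖ν) − (m/n)·log(n+1) ≤ (1/n)·log π_n(Q|ν) ≤ max_{q∈Q∩R_n} L(q‖ν) − max_{q∈R_n} L(q‖ν) + (m/n)·log(n+1), where the inequalities hold in ℝ ∪ {−∞} (both sides are −∞ exactly when every q ∈ Q∩R_n vanishes at some point of the support of ν). -/

import Mathlib

open scoped BigOperators Classical
open Filter Topology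

noncomputable section

def pmfSet (X : Type*) [Fintype X] : Set (X → ℝ) :=
  {p | (∀ x, 0 ≤ p x) ∧ ∑ x, p x = 1}

def Rn (X : Type*) [Fintype X] (n : ℕ) : Set (X → ℝ) :=
  {q | q ∈ pmfSet X ∧ ∀ x, ∃ k : ℕ, q x = (k : ℝ) / (n : ℝ)}

def ratPMF (X : Type*) [Fintype X] : Set (X → ℝ) :=
  {q | q ∈ pmfSet X ∧ ∀ x, ∃ r : ℚ, q x = (r : ℝ)}

def Ldiv {X : Type*} [Fintype X] (q p : X → ℝ) : EReal :=
  ∑ x, if p x = 0 then (0 : EReal)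
    else if q x = 0 then (⊥ : EReal)
    else (↑(p x * Real.log (q x)) : EReal)

def LSup {X : Type*} [Fintype X] (Q : Set (X → ℝ)) (p : X → ℝ) : EReal :=
  ⨆ q ∈ Q, Ldiv q p

def Idiv {X : Type*} [Fintype X] (p q : X → ℝ) : EReal :=
  ∑ x, if p x = 0 then (0 : EReal)
    else if q x = 0 then (⊤ : EReal)
    else (↑(p x * Real.log (p x / q x)) : EReal)

def typeProb {X : Type*} [Fintype X] (n : ℕ) (ν q : X → ℝ) : ℝ :=
  ∏ x, q x ^ ((n : ℝ) * ν x)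

def post {X : Type*} [Fintype X] (n : ℕ) (ν : X → ℝ) (Q : Set (X → ℝ)) : ℝ :=
  (∑' q : ↥(Q ∩ Rn X n), typeProb n ν ↑q) / (∑' q : ↥(Rn X n), typeProb n ν ↑q)

def postGen {X : Type*} [Fintype X] (w : (X → ℝ) → ℝ) (n : ℕ) (ν : X → ℝ)
    (Q : Set (X → ℝ)) : ℝ :=
  (∑' q : ↥(Q ∩ Rn X n), w ↑q * typeProb n ν ↑q) /
  (∑' q : ↥(Rn X n), w ↑q * typeProb n ν ↑q)

def tv {X : Type*} [Fintype X] (p q : X → ℝ) : ℝ := (1 / 2) * ∑ x, |p x - q x|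

def tvBall {X : Type*} [Fintype X] (q : X → ℝ) (ε : ℝ) : Set (X → ℝ) :=
  {p | p ∈ pmfSet X ∧ tv p q ≤ ε}

def elog (x : ℝ) : EReal := if x ≤ 0 then (⊥ : EReal) else (↑(Real.log x) : EReal)

def linFam {X : Type*} [Fintype X] {k : ℕ} (u : Fin k → X → ℝ) (a : Fin k → ℝ) :
    Set (X → ℝ) :=
  {q | q ∈ pmfSet X ∧ ∀ j, ∑ x, q x * u j x = a j}

def lambdaN {X : Type*} [Fintype X] (w : (X → ℝ) → ℝ) (n : ℕ) (ν : X → ℝ)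
    (C : Set (X → ℝ)) : EReal :=
  ⨆ q ∈ C ∩ {q | q ∈ Rn X n ∧ 0 < w q},
    (Ldiv q ν + (↑((1 : ℝ) / n * Real.log (w q)) : EReal))

def priorN {X : Type*} [Fintype X] (c : ℕ → (X → ℝ) → (X → ℝ)) (pr : (X → ℝ) → ℝ)
    (n : ℕ) (qn : X → ℝ) : ℝ :=
  ∑' q : ↥{q | q ∈ ratPMF X ∧ c n q = qn}, pr ↑q

/-! For `q` with `supp ν ⊆ supp q` the likelihood `∏ x, q x ^ (n ν x)` of the type `ν` equals
`exp (n L(q‖ν))`, and it vanishes otherwise, which is exactly when `L(q‖ν) = ⊥`. So the total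
likelihood of a set `S ⊆ R_n` lies between its largest term `exp (n max_S L(·‖ν))` and
`|R_n| ≤ (n+1)^m` times that term: `(1/n) log` of it is `max_S L(·‖ν)` up to `(m/n) log (n+1)`.
The posterior is the quotient of these totals for `S = Q ∩ R_n` and `S = R_n`; when every
`q ∈ Q ∩ R_n` misses part of `supp ν`, its numerator vanishes and both sides are `⊥`. -/

lemma le_one_of_mem_pmfSet {X : Type*} [Fintype X] {q : X → ℝ} (hq : q ∈ pmfSet X) (x : X) :
    q x ≤ 1 :=
  hq.2 ▸ Finset.single_le_sum (fun y _ => hq.1 y) (Finset.mem_univ x)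

namespace Rn

variable {X : Type*} [Fintype X] {n : ℕ}

lemma subset_range (hn : n ≠ 0) :
    Rn X n ⊆ Set.range fun (k : X → Fin (n + 1)) x => ((k x : ℕ) : ℝ) / n := by
  rintro q ⟨hq, hk⟩
  choose k hk using hk
  have hkn : ∀ x, k x < n + 1 := fun x => by
    have := hk x ▸ le_one_of_mem_pmfSet hq x
    rw [div_le_one (by positivity)] at this
    exact_mod_cast Nat.lt_succ_of_le (by exact_mod_cast this)
  exact ⟨fun x => ⟨k x, hkn x⟩, funext fun x => (hk x).symm⟩

lemma finite (hn : n ≠ 0) : (Rn X n).Finite :=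
  (Set.finite_range _).subset (subset_range hn)

lemma ncard_le (hn : n ≠ 0) : (Rn X n).ncard ≤ (n + 1) ^ Fintype.card X :=
  calc (Rn X n).ncard ≤ (Set.range _).ncard := Set.ncard_le_ncard (subset_range hn)
    _ ≤ Nat.card (X → Fin (n + 1)) := Finite.card_range_le _
    _ = (n + 1) ^ Fintype.card X := by simp

end Rn

lemma EReal.coe_finset_sum {ι : Type*} (s : Finset ι) (f : ι → ℝ) :
    ((∑ i ∈ s, f i : ℝ) : EReal) = ∑ i ∈ s, (f i : EReal) :=
  map_sum (⟨⟨(↑), EReal.coe_zero⟩, EReal.coe_add⟩ : ℝ →+ EReal) f s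

section TypeProb

variable {X : Type*} [Fintype X]

lemma Ldiv_eq_bot {q ν : X → ℝ} (h : ¬ ν.support ⊆ q.support) : Ldiv q ν = ⊥ := by
  obtain ⟨x, hνx, hqx⟩ := Set.not_subset.mp h
  rw [Function.mem_support] at hνx
  rw [Function.notMem_support] at hqx
  rw [Ldiv, ← Finset.add_sum_erase _ _ (Finset.mem_univ x), if_neg hνx, if_pos hqx,
    EReal.bot_add]

lemma Ldiv_eq_coe {q ν : X → ℝ} (h : ν.support ⊆ q.support) :
    Ldiv q ν = ((∑ x, ν x * Real.log (q x) : ℝ) : EReal) := by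
  rw [Ldiv, EReal.coe_finset_sum]
  refine Finset.sum_congr rfl fun x _ => ?_
  by_cases hνx : ν x = 0
  · simp [hνx]
  · rw [if_neg hνx, if_neg (h hνx)]

lemma typeProb_eq_zero {n : ℕ} (hn : n ≠ 0) {q ν : X → ℝ} (h : ¬ ν.support ⊆ q.support) :
    typeProb n ν q = 0 := by
  obtain ⟨x, hνx, hqx⟩ := Set.not_subset.mp h
  rw [Function.mem_support] at hνx
  rw [Function.notMem_support] at hqx
  refine Finset.prod_eq_zero (Finset.mem_univ x) ?_
  rw [hqx, Real.zero_rpow (mul_ne_zero (Nat.cast_ne_zero.mpr hn) hνx)]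

lemma typeProb_eq_exp (n : ℕ) {q ν : X → ℝ} (hq : ∀ x, 0 ≤ q x)
    (h : ν.support ⊆ q.support) :
    typeProb n ν q = Real.exp (n * ∑ x, ν x * Real.log (q x)) := by
  rw [typeProb, Finset.mul_sum, Real.exp_sum]
  refine Finset.prod_congr rfl fun x _ => ?_
  by_cases hνx : ν x = 0
  · simp [hνx]
  · rw [Real.rpow_def_of_pos ((hq x).lt_of_ne (h hνx).symm)]
    ring_nf

lemma typeProb_nonneg (n : ℕ) (ν : X → ℝ) {q : X → ℝ} (hq : ∀ x, 0 ≤ q x) :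
    0 ≤ typeProb n ν q :=
  Finset.prod_nonneg fun x _ => Real.rpow_nonneg (hq x) _

lemma support_subset_of_Ldiv_le {p q ν : X → ℝ} (hq : ν.support ⊆ q.support)
    (h : Ldiv q ν ≤ Ldiv p ν) : ν.support ⊆ p.support := by
  by_contra hp
  rw [Ldiv_eq_bot hp, Ldiv_eq_coe hq] at h
  exact EReal.coe_ne_bot _ (le_bot_iff.mp h)

lemma typeProb_le_of_Ldiv_le {n : ℕ} (hn : n ≠ 0) {p q ν : X → ℝ} (hp : ∀ x, 0 ≤ p x)
    (hq : ∀ x, 0 ≤ q x) (h : Ldiv q ν ≤ Ldiv p ν) : typeProb n ν q ≤ typeProb n ν p := by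
  by_cases hqν : ν.support ⊆ q.support
  · have hpν := support_subset_of_Ldiv_le hqν h
    rw [Ldiv_eq_coe hqν, Ldiv_eq_coe hpν, EReal.coe_le_coe_iff] at h
    rw [typeProb_eq_exp n hq hqν, typeProb_eq_exp n hp hpν]
    gcongr
  · rw [typeProb_eq_zero hn hqν]
    exact typeProb_nonneg n ν hp

end TypeProb

def typeMass {X : Type*} [Fintype X] (n : ℕ) (ν : X → ℝ) (S : Set (X → ℝ)) : ℝ :=
  ∑' q : ↥S, typeProb n ν ↑q

section TypeMass

variable {X : Type*} [Fintype X] {n : ℕ} {ν : X → ℝ} {S : Set (X → ℝ)}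

lemma post_eq_div (Q : Set (X → ℝ)) :
    post n ν Q = typeMass n ν (Q ∩ Rn X n) / typeMass n ν (Rn X n) := rfl

lemma typeMass_eq_zero (hn : n ≠ 0) (h : ∀ q ∈ S, ¬ ν.support ⊆ q.support) :
    typeMass n ν S = 0 :=
  (tsum_congr fun q : S => typeProb_eq_zero hn (h q q.2)).trans tsum_zero

lemma LSup_eq_bot (h : ∀ q ∈ S, ¬ ν.support ⊆ q.support) : LSup S ν = ⊥ :=
  iSup₂_eq_bot.mpr fun q hq => Ldiv_eq_bot (h q hq)

lemma typeMass_bounds (hn : n ≠ 0) (hS : S ⊆ Rn X n) {p : X → ℝ} (hpS : p ∈ S)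
    (hp : ∀ q ∈ S, Ldiv q ν ≤ Ldiv p ν) :
    typeProb n ν p ≤ typeMass n ν S ∧
      typeMass n ν S ≤ ((n : ℝ) + 1) ^ Fintype.card X * typeProb n ν p := by
  have : Fintype S := ((Rn.finite hn).subset hS).fintype
  have hnonneg : ∀ q ∈ S, ∀ x, 0 ≤ q x := fun q hq => (hS hq).1.1
  have hcard : Fintype.card S ≤ (n + 1) ^ Fintype.card X := calc
    Fintype.card S = S.ncard := by rw [← Nat.card_eq_fintype_card, Nat.card_coe_set_eq]
    _ ≤ (Rn X n).ncard := Set.ncard_le_ncard hS (Rn.finite hn)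
    _ ≤ (n + 1) ^ Fintype.card X := Rn.ncard_le hn
  rw [typeMass, tsum_fintype]
  constructor
  · exact Finset.single_le_sum (f := fun q : S => typeProb n ν q)
      (fun q _ => typeProb_nonneg n ν (hnonneg q q.2)) (Finset.mem_univ ⟨p, hpS⟩)
  · calc ∑ q : S, typeProb n ν q ≤ Finset.univ.card • typeProb n ν p :=
          Finset.sum_le_card_nsmul _ _ _ fun q _ =>
            typeProb_le_of_Ldiv_le hn (hnonneg p hpS) (hnonneg q q.2) (hp q q.2)
      _ ≤ ((n : ℝ) + 1) ^ Fintype.card X * typeProb n ν p := by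
          rw [nsmul_eq_mul, Finset.card_univ]
          gcongr
          · exact typeProb_nonneg n ν (hnonneg p hpS)
          · exact_mod_cast hcard

lemma exists_LSup_eq_coe_and_log_typeMass_bounds (hn : n ≠ 0) (hS : S ⊆ Rn X n)
    (hsupp : ∃ q ∈ S, ν.support ⊆ q.support) :
    ∃ a : ℝ, LSup S ν = a ∧ 0 < typeMass n ν S ∧
      a ≤ 1 / n * Real.log (typeMass n ν S) ∧
      1 / n * Real.log (typeMass n ν S) ≤ a + Fintype.card X / n * Real.log (n + 1) := by
  obtain ⟨q₀, hq₀S, hq₀⟩ := hsupp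
  obtain ⟨p, hpS, hp⟩ := S.exists_max_image (Ldiv · ν) ((Rn.finite hn).subset hS) ⟨q₀, hq₀S⟩
  have hpν := support_subset_of_Ldiv_le hq₀ (hp q₀ hq₀S)
  set a := ∑ x, ν x * Real.log (p x)
  have hLSup : LSup S ν = a :=
    (le_antisymm (iSup₂_le hp) (le_biSup (Ldiv · ν) hpS)).trans (Ldiv_eq_coe hpν)
  obtain ⟨hlo, hhi⟩ := typeMass_bounds hn hS hpS hp
  rw [typeProb_eq_exp n (hS hpS).1.1 hpν] at hlo hhi
  have hn' : (0 : ℝ) < n := by positivity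
  have hZ : 0 < typeMass n ν S := (Real.exp_pos _).trans_le hlo
  have hlog_lo : n * a ≤ Real.log (typeMass n ν S) := by
    simpa using Real.log_le_log (Real.exp_pos _) hlo
  have hlog_hi : Real.log (typeMass n ν S) ≤ Fintype.card X * Real.log (n + 1) + n * a := by
    calc Real.log (typeMass n ν S)
        ≤ Real.log (((n : ℝ) + 1) ^ Fintype.card X * Real.exp (n * a)) := Real.log_le_log hZ hhi
      _ = Fintype.card X * Real.log (n + 1) + n * a := by
          rw [Real.log_mul (by positivity) (Real.exp_pos _).ne', Real.log_pow, Real.log_exp]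
  refine ⟨a, hLSup, hZ, ?_, ?_⟩
  · rw [one_div_mul_eq_div, le_div_iff₀ hn']
    linarith
  · rw [one_div_mul_eq_div, div_le_iff₀ hn', div_mul_eq_mul_div, add_mul,
      div_mul_cancel₀ _ hn'.ne']
    linarith

end TypeMass

theorem finite_n_sandwich_uniform_prior_general {X : Type*} [Fintype X]
    (n : ℕ) (hn : 1 ≤ n) (ν : X → ℝ) (hν : ν ∈ Rn X n)
    (Q : Set (X → ℝ)) :
    (LSup (Q ∩ Rn X n) ν - LSup (Rn X n) ν
        - (↑((Fintype.card X : ℝ) / n * Real.log (n + 1)) : EReal)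
      ≤ (↑((1 : ℝ) / n) : EReal) * elog (post n ν Q)) ∧
    ((↑((1 : ℝ) / n) : EReal) * elog (post n ν Q)
      ≤ LSup (Q ∩ Rn X n) ν - LSup (Rn X n) ν
        + (↑((Fintype.card X : ℝ) / n * Real.log (n + 1)) : EReal)) ∧
    ((↑((1 : ℝ) / n) : EReal) * elog (post n ν Q) = ⊥ ↔
      ∀ q ∈ Q ∩ Rn X n, ∃ x, 0 < ν x ∧ q x = 0) := by
  have hn0 : n ≠ 0 := Nat.one_le_iff_ne_zero.mp hn
  have hsupp_iff (q : X → ℝ) : (∃ x, 0 < ν x ∧ q x = 0) ↔ ¬ ν.support ⊆ q.support := by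
    simp [(hν.1.1 _).lt_iff_ne']
  obtain ⟨b, hLR, hZR, hbR⟩ :=
    exists_LSup_eq_coe_and_log_typeMass_bounds hn0 subset_rfl ⟨ν, hν, subset_rfl⟩
  by_cases hdeg : ∀ q ∈ Q ∩ Rn X n, ¬ ν.support ⊆ q.support
  · have hpost : (↑((1 : ℝ) / n) : EReal) * elog (post n ν Q) = ⊥ := by
      rw [post_eq_div, typeMass_eq_zero hn0 hdeg, zero_div, elog, if_pos le_rfl,
        EReal.coe_mul_bot_of_pos (by positivity)]
    rw [hpost, LSup_eq_bot hdeg, EReal.bot_sub, EReal.bot_sub]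
    exact ⟨le_rfl, bot_le, iff_of_true rfl fun q hq => (hsupp_iff q).mpr (hdeg q hq)⟩
  · push Not at hdeg
    obtain ⟨a, hLQ, hZQ, haQ⟩ :=
      exists_LSup_eq_coe_and_log_typeMass_bounds hn0 Set.inter_subset_right hdeg
    have hpost : (↑((1 : ℝ) / n) : EReal) * elog (post n ν Q) =
        ↑(1 / n * Real.log (typeMass n ν (Q ∩ Rn X n)) -
          1 / n * Real.log (typeMass n ν (Rn X n))) := by
      rw [post_eq_div, elog, if_neg (div_pos hZQ hZR).not_ge, Real.log_div hZQ.ne' hZR.ne',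
        ← EReal.coe_mul, mul_sub]
    obtain ⟨q, hq, hqν⟩ := hdeg
    rw [hpost, hLQ, hLR]
    refine ⟨?_, ?_, iff_of_false (EReal.coe_ne_bot _) fun h => (hsupp_iff q).mp (h q hq) hqν⟩
    · exact_mod_cast (by linarith : a - b - Fintype.card X / n * Real.log (n + 1) ≤ _)
    · exact_mod_cast (by linarith : _ ≤ a - b + Fintype.card X / n * Real.log (n + 1))

/-- Finite-n sandwich bound for the uniform-prior posterior. -/
theorem finite_n_sandwich_uniform_prior {X : Type*} [Fintype X] [Nonempty X]
    (n : ℕ) (hn : 1 ≤ n) (ν : X → ℝ) (hν : ν ∈ Rn X n)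
    (Q : Set (X → ℝ)) (hQsub : Q ⊆ pmfSet X) (hQRn : (Q ∩ Rn X n).Nonempty) :
    (LSup (Q ∩ Rn X n) ν - LSup (Rn X n) ν
        - (↑((Fintype.card X : ℝ) / n * Real.log (n + 1)) : EReal)
      ≤ (↑((1 : ℝ) / n) : EReal) * elog (post n ν Q)) ∧
    ((↑((1 : ℝ) / n) : EReal) * elog (post n ν Q)
      ≤ LSup (Q ∩ Rn X n) ν - LSup (Rn X n) ν
        + (↑((Fintype.card X : ℝ) / n * Real.log (n + 1)) : EReal)) ∧
    ((↑((1 : ℝ) / n) : EReal) * elog (post n ν Q) = ⊥ ↔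
      ∀ q ∈ Q ∩ Rn X n, ∃ x, 0 < ν x ∧ q x = 0) :=
  finite_n_sandwich_uniform_prior_general n hn ν hν Q
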